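/- arXiv:1004.1511 — 2 statements merged into one kernel-verified Lean document; each statement's English description precedes it below -/
import Mathlib

section
/- (3/4)^n · A_2(2n,d) ≤ T(n,d): for every binary code C ⊆ {0,1}^{2n} of minimum Hamming distance at least d, there exists x ∈ {0,1}^{2n} such that |(x + C) ∩ A^n| ≥ |C|·3^n/2^{2n}, where A = {(0,1),(0,0),(1,0)}; consequently there is a code in {-1,0,1}^n of minimum d_1-distance at least d and size at least (3/4)^n·|C|. -/
/-!
Averaging over translates: a fixed word `c` of `{0,1}^{2n}` lands in `Aⁿ` under exactly `3^n` of
the `4^n` translations, so some translate `x + C` keeps at least `(3/4)^n · |C|` words of `C`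
inside `Aⁿ`. Translation preserves Hamming distance, and on `Aⁿ` the decoding
`(a, b) ↦ a - b` (the inverse of `φ`) turns Hamming distance into `d₁`-distance, so these
words decode to a ternary code of the same size and minimum distance.
-/

open Finset

/-- The `d₁`-distance between two integer vectors: `∑ i, |x i - y i|`. -/
def d1 {n : ℕ} (x y : Fin n → ℤ) : ℕ := ∑ i, (x i - y i).natAbs

/-- `x` is a vector over the ternary alphabet `Q = {-1, 0, 1}`. -/
def isQ {n : ℕ} (x : Fin n → ℤ) : Prop := ∀ i, x i = -1 ∨ x i = 0 ∨ x i = 1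

/-- `T n d`: the maximum size of a code in `Q^n` with minimum `d₁`-distance at least `d`. -/
noncomputable def T (n d : ℕ) : ℕ :=
  sSup {m | ∃ C : Finset (Fin n → ℤ), (∀ x ∈ C, isQ x) ∧
    (∀ x ∈ C, ∀ y ∈ C, x ≠ y → d ≤ d1 x y) ∧ C.card = m}

/-- `A2 n e`: the maximum size of a binary code of length `n` with minimum
Hamming distance at least `e`. -/
noncomputable def A2 (n e : ℕ) : ℕ :=
  sSup {m | ∃ C : Finset (Fin n → Fin 2),
    (∀ x ∈ C, ∀ y ∈ C, x ≠ y → e ≤ hammingDist x y) ∧ C.card = m}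

/-- `A3 n e`: the maximum size of a ternary code (over `Q`) of length `n` with minimum
Hamming distance at least `e`. -/
noncomputable def A3 (n e : ℕ) : ℕ :=
  sSup {m | ∃ C : Finset (Fin n → ℤ), (∀ x ∈ C, isQ x) ∧
    (∀ x ∈ C, ∀ y ∈ C, x ≠ y → e ≤ hammingDist x y) ∧ C.card = m}

section Averaging

variable {G : Type*} [AddGroup G] [Fintype G] [DecidableEq G]

lemma card_filter_add_mem (S : Finset G) (c : G) :
    #{x | x + c ∈ S} = #S :=
  card_equiv (Equiv.addRight c) (by simp)

lemma sum_card_filter_add_mem (C S : Finset G) :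
    ∑ x, #{c ∈ C | x + c ∈ S} = #C * #S := by
  calc ∑ x, #{c ∈ C | x + c ∈ S}
      = ∑ c ∈ C, #{x | x + c ∈ S} :=
        sum_card_bipartiteAbove_eq_sum_card_bipartiteBelow (fun x c => x + c ∈ S)
    _ = #C * #S := by simp [card_filter_add_mem]

lemma exists_card_mul_card_le_card_filter_add_mem (C S : Finset G) :
    ∃ x, #C * #S ≤ Fintype.card G * #{c ∈ C | x + c ∈ S} := by
  have : ∑ _x : G, #C * #S ≤ ∑ x, Fintype.card G * #{c ∈ C | x + c ∈ S} := by
    rw [sum_const, ← mul_sum, sum_card_filter_add_mem, card_univ, smul_eq_mul]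
  obtain ⟨x, -, hx⟩ := exists_le_of_sum_le univ_nonempty this
  exact ⟨x, hx⟩

end Averaging

lemma hammingDist_comp_equiv {ι κ β : Type*} [Fintype ι] [Fintype κ] [DecidableEq β]
    (e : ι ≃ κ) (f g : κ → β) : hammingDist (f ∘ e) (g ∘ e) = hammingDist f g :=
  card_equiv e (by simp)

lemma hammingDist_prod_eq_sum {ι κ β : Type*} [Fintype ι] [Fintype κ] [DecidableEq β]
    (y z : ι × κ → β) :
    hammingDist y z = ∑ i, hammingDist (fun j => y (i, j)) (fun j => z (i, j)) := by
  simp only [hammingDist, card_filter, Fintype.sum_prod_type]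

/-- `Aⁿ ⊆ {0,1}^{2n}`, the coordinates `(i, 0), (i, 1)` forming the `i`-th symbol of `A`. -/
def wordsA (n : ℕ) : Finset (Fin n × Fin 2 → Fin 2) :=
  {y | ∀ i, ¬(y (i, 0) = 1 ∧ y (i, 1) = 1)}

lemma card_wordsA (n : ℕ) : #(wordsA n) = 3 ^ n := by
  let blockA : Finset (Fin 2 → Fin 2) := {p | ¬(p 0 = 1 ∧ p 1 = 1)}
  have hblock : #blockA = 3 := by decide
  calc #(wordsA n) = #(Fintype.piFinset fun _ : Fin n => blockA) :=
        card_equiv (Equiv.curry _ _ _) (by simp [wordsA, blockA])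
    _ = 3 ^ n := by simp [hblock]

/-- `φ⁻¹` applied symbolwise: `(a, b) ↦ a - b`. -/
def toTernary {n : ℕ} (y : Fin n × Fin 2 → Fin 2) : Fin n → ℤ :=
  fun i => (y (i, 0) : ℤ) - y (i, 1)

lemma isQ_toTernary {n : ℕ} (y : Fin n × Fin 2 → Fin 2) : isQ (toTernary y) := by
  intro i
  unfold toTernary
  generalize y (i, 0) = a, y (i, 1) = b
  revert a b
  decide

lemma natAbs_sub_eq_hammingDist (p q : Fin 2 → Fin 2)
    (hp : ¬(p 0 = 1 ∧ p 1 = 1)) (hq : ¬(q 0 = 1 ∧ q 1 = 1)) :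
    (((p 0 : ℤ) - p 1) - ((q 0 : ℤ) - q 1)).natAbs = hammingDist p q := by
  revert p q
  decide

lemma d1_toTernary {n : ℕ} {y z : Fin n × Fin 2 → Fin 2} (hy : y ∈ wordsA n)
    (hz : z ∈ wordsA n) : d1 (toTernary y) (toTernary z) = hammingDist y z := by
  simp only [wordsA, mem_filter, mem_univ, true_and] at hy hz
  rw [hammingDist_prod_eq_sum]
  exact sum_congr rfl fun i _ =>
    natAbs_sub_eq_hammingDist (fun j => y (i, j)) (fun j => z (i, j)) (hy i) (hz i)

lemma exists_translate_card_filter_mem_wordsA {n : ℕ} (C : Finset (Fin n × Fin 2 → Fin 2)) :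
    ∃ x, 3 ^ n * #C ≤ 4 ^ n * #{c ∈ C | x + c ∈ wordsA n} := by
  obtain ⟨x, hx⟩ := exists_card_mul_card_le_card_filter_add_mem C (wordsA n)
  refine ⟨x, ?_⟩
  have hcard : Fintype.card (Fin n × Fin 2 → Fin 2) = 4 ^ n := by
    simp [mul_comm n, pow_mul]
  rwa [card_wordsA, hcard, mul_comm] at hx

lemma exists_ternaryCode_card_eq_card_filter {n d : ℕ} (C : Finset (Fin n × Fin 2 → Fin 2))
    (hC : ∀ y ∈ C, ∀ z ∈ C, y ≠ z → d ≤ hammingDist y z) (x : Fin n × Fin 2 → Fin 2) :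
    ∃ D : Finset (Fin n → ℤ), (∀ u ∈ D, isQ u) ∧ (∀ u ∈ D, ∀ v ∈ D, u ≠ v → d ≤ d1 u v) ∧
      #D = #{c ∈ C | x + c ∈ wordsA n} := by
  set C' := {c ∈ C | x + c ∈ wordsA n}
  have hdist : ∀ c ∈ C', ∀ c' ∈ C',
      d1 (toTernary (x + c)) (toTernary (x + c')) = hammingDist c c' := by
    intro c hc c' hc'
    rw [d1_toTernary (mem_filter.1 hc).2 (mem_filter.1 hc').2, hammingDist_eq_hammingNorm,
      hammingDist_eq_hammingNorm]
    congr 1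
    abel
  have hinj : Set.InjOn (fun c => toTernary (x + c)) C' := by
    intro c hc c' hc' (h : toTernary (x + c) = toTernary (x + c'))
    rw [← hammingDist_eq_zero, ← hdist c hc c' hc', h]
    simp [d1]
  refine ⟨C'.image fun c => toTernary (x + c), by simp [isQ_toTernary], ?_,
    card_image_of_injOn hinj⟩
  simp only [mem_image]
  rintro _ ⟨c, hc, rfl⟩ _ ⟨c', hc', rfl⟩ hne
  rw [hdist c hc c' hc']
  exact hC c (mem_filter.1 hc).1 c' (mem_filter.1 hc').1 fun h => hne (h ▸ rfl)

lemma exists_ternaryCode_of_binaryCode {n d : ℕ} (C : Finset (Fin n × Fin 2 → Fin 2))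
    (hC : ∀ y ∈ C, ∀ z ∈ C, y ≠ z → d ≤ hammingDist y z) :
    ∃ D : Finset (Fin n → ℤ), (∀ u ∈ D, isQ u) ∧ (∀ u ∈ D, ∀ v ∈ D, u ≠ v → d ≤ d1 u v) ∧
      3 ^ n * #C ≤ 4 ^ n * #D := by
  obtain ⟨x, hx⟩ := exists_translate_card_filter_mem_wordsA C
  obtain ⟨D, hQ, hD, hcard⟩ := exists_ternaryCode_card_eq_card_filter C hC x
  exact ⟨D, hQ, hD, hcard ▸ hx⟩

lemma card_le_T {n d : ℕ} (D : Finset (Fin n → ℤ)) (hQ : ∀ u ∈ D, isQ u)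
    (hD : ∀ u ∈ D, ∀ v ∈ D, u ≠ v → d ≤ d1 u v) : #D ≤ T n d := by
  refine le_csSup ⟨3 ^ n, ?_⟩ ⟨D, hQ, hD, rfl⟩
  rintro _ ⟨E, hE, -, rfl⟩
  calc #E ≤ #(Fintype.piFinset fun _ : Fin n => ({-1, 0, 1} : Finset ℤ)) :=
        card_le_card fun u hu => Fintype.mem_piFinset.2 fun i => by simpa using hE u hu i
    _ = 3 ^ n := by simp

lemma exists_code_card_eq_A2 (n d : ℕ) :
    ∃ C : Finset (Fin n × Fin 2 → Fin 2),
      (∀ y ∈ C, ∀ z ∈ C, y ≠ z → d ≤ hammingDist y z) ∧ #C = A2 (2 * n) d := by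
  obtain ⟨C, hC, hcard⟩ : A2 (2 * n) d ∈ {m | ∃ C : Finset (Fin (2 * n) → Fin 2),
      (∀ x ∈ C, ∀ y ∈ C, x ≠ y → d ≤ hammingDist x y) ∧ C.card = m} := by
    refine Nat.sSup_mem ⟨0, ∅, by simp, rfl⟩ ⟨Fintype.card (Fin (2 * n) → Fin 2), ?_⟩
    rintro _ ⟨C, -, rfl⟩
    exact card_le_univ C
  let σ : Fin n × Fin 2 ≃ Fin (2 * n) := finProdFinEquiv.trans (finCongr (mul_comm n 2))
  refine ⟨C.map (σ.symm.arrowCongr (Equiv.refl _)).toEmbedding, ?_, by rw [card_map, hcard]⟩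
  simp only [mem_map]
  rintro _ ⟨f, hf, rfl⟩ _ ⟨g, hg, rfl⟩ hne
  exact (hammingDist_comp_equiv σ f g).symm ▸ hC f hf g hg fun h => hne (h ▸ rfl)

/-- Lower bound `(3/4)^n · A₂(2n,d) ≤ T(n,d)`, together with the translation argument:
for every binary code `C` of length `2n` (indexed by `Fin n × Fin 2`) with minimum Hamming
distance at least `d`, some translate `x + C` meets `Aⁿ` (where `A = {(0,1),(0,0),(1,0)}`,
i.e. no position `i` carries the pair `(1,1)`) in at least `|C|·3^n/2^(2n)` words, and
consequently there is a code in `Q^n` of minimum `d₁`-distance at least `d` and size at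
least `(3/4)^n·|C|`. -/
theorem stmt_13 (n d : ℕ) :
    3 ^ n * A2 (2 * n) d ≤ 4 ^ n * T n d ∧
    ∀ C : Finset (Fin n × Fin 2 → Fin 2),
      (∀ x ∈ C, ∀ y ∈ C, x ≠ y → d ≤ hammingDist x y) →
      (∃ x : Fin n × Fin 2 → Fin 2,
        3 ^ n * C.card ≤
          4 ^ n * (C.filter
            (fun c => ∀ i : Fin n, ¬(x (i, 0) + c (i, 0) = 1 ∧ x (i, 1) + c (i, 1) = 1))).card) ∧
      ∃ D : Finset (Fin n → ℤ), (∀ x ∈ D, isQ x) ∧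
        (∀ x ∈ D, ∀ y ∈ D, x ≠ y → d ≤ d1 x y) ∧
        3 ^ n * C.card ≤ 4 ^ n * D.card := by
  refine ⟨?_, fun C hC => ⟨?_, exists_ternaryCode_of_binaryCode C hC⟩⟩
  · obtain ⟨C, hC, hcard⟩ := exists_code_card_eq_A2 n d
    obtain ⟨D, hQ, hD, hle⟩ := exists_ternaryCode_of_binaryCode C hC
    calc 3 ^ n * A2 (2 * n) d = 3 ^ n * #C := by rw [hcard]
      _ ≤ 4 ^ n * #D := hle
      _ ≤ 4 ^ n * T n d := Nat.mul_le_mul_left _ (card_le_T D hQ hD)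
  · obtain ⟨x, hx⟩ := exists_translate_card_filter_mem_wordsA C
    exact ⟨x, by simpa [wordsA] using hx⟩
end

section
/- If C ⊆ {-1,0,1}^n has minimum d_1-distance at least d with d > n and |C| = d/(d−n) (i.e., the Plotkin bound is attained), then C ⊆ {-1,1}^n. -/
/-!
Let `M = |C|` and let `m₀(i)` be the number of codewords with `0` in position `i`. For ternary
`q, r` one has `|q - r| = 1 - q r - [q = 0][r = 0]`, so summing over ordered pairs of codewords the
`i`-th coordinate contributes `M² - (∑ₓ xᵢ)² - m₀(i)² ≤ M² - m₀(i)²` to `∑_{x,y} d₁(x, y)`, while the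
minimum distance bounds that sum below by `M(M-1)d`. Hence `M(M-1)d + ∑ᵢ m₀(i)² ≤ nM²`. When
`M = d/(d-n)` we have `M(M-1)d = nM²`, so every `m₀(i)` vanishes.
-/

open Finset

lemma abs_sub_of_ternary {q r : ℤ} (hq : q = -1 ∨ q = 0 ∨ q = 1)
    (hr : r = -1 ∨ r = 0 ∨ r = 1) :
    |q - r| = 1 - q * r - (if q = 0 then 1 else 0) * (if r = 0 then 1 else 0) := by
  rcases hq with rfl | rfl | rfl <;> rcases hr with rfl | rfl | rfl <;> decide

lemma sum_sum_abs_sub_of_ternary {α : Type*} (s : Finset α) (f : α → ℤ)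
    (hf : ∀ a ∈ s, f a = -1 ∨ f a = 0 ∨ f a = 1) :
    ∑ a ∈ s, ∑ b ∈ s, |f a - f b|
      = (#s : ℤ) ^ 2 - (∑ a ∈ s, f a) ^ 2 - (#{a ∈ s | f a = 0} : ℤ) ^ 2 := by
  rw [natCast_card_filter, sq, sq, sq, sum_mul_sum, sum_mul_sum, card_eq_sum_ones, Nat.cast_sum,
    Nat.cast_one, sum_mul_sum, ← sum_sub_distrib, ← sum_sub_distrib]
  refine sum_congr rfl fun a ha => ?_
  rw [← sum_sub_distrib, ← sum_sub_distrib]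
  refine sum_congr rfl fun b hb => ?_
  rw [abs_sub_of_ternary (hf a ha) (hf b hb), one_mul]

lemma card_mul_card_sub_one_mul_le_sum_sum {α : Type*} [DecidableEq α] (s : Finset α)
    (f : α → α → ℕ) (d : ℕ) (h : ∀ x ∈ s, ∀ y ∈ s, x ≠ y → d ≤ f x y) :
    #s * (#s - 1) * d ≤ ∑ x ∈ s, ∑ y ∈ s, f x y :=
  calc #s * (#s - 1) * d = #s.offDiag • d := by rw [offDiag_card, Nat.mul_sub_one, smul_eq_mul]
    _ ≤ ∑ p ∈ s.offDiag, f p.1 p.2 :=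
        card_nsmul_le_sum _ _ _ fun p hp => by
          obtain ⟨hx, hy, hxy⟩ := mem_offDiag.mp hp
          exact h _ hx _ hy hxy
    _ ≤ ∑ p ∈ s ×ˢ s, f p.1 p.2 :=
        sum_le_sum_of_subset fun p hp => by
          obtain ⟨hx, hy, -⟩ := mem_offDiag.mp hp
          exact mem_product.mpr ⟨hx, hy⟩
    _ = ∑ x ∈ s, ∑ y ∈ s, f x y := sum_product _ _ _

lemma sum_sum_d1 {n : ℕ} (C : Finset (Fin n → ℤ)) :
    ∑ x ∈ C, ∑ y ∈ C, (d1 x y : ℤ) = ∑ i, ∑ x ∈ C, ∑ y ∈ C, |x i - y i| := by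
  push_cast [d1, Int.natCast_natAbs]
  exact (sum_congr rfl fun _ _ => sum_comm).trans sum_comm

lemma card_mul_card_sub_one_mul_add_sum_sq_card_zero_le {n d : ℕ} (C : Finset (Fin n → ℤ))
    (hQ : ∀ x ∈ C, isQ x) (hd : ∀ x ∈ C, ∀ y ∈ C, x ≠ y → d ≤ d1 x y) :
    (#C : ℤ) * (#C - 1) * d + ∑ i, (#{x ∈ C | x i = 0} : ℤ) ^ 2 ≤ n * (#C : ℤ) ^ 2 := by
  have hlow : (#C : ℤ) * (#C - 1) * d ≤ ∑ i, ∑ x ∈ C, ∑ y ∈ C, |x i - y i| := by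
    rcases C.eq_empty_or_nonempty with rfl | hC
    · simp
    · have hle := card_mul_card_sub_one_mul_le_sum_sum C d1 d hd
      zify [hC.card_pos] at hle
      rwa [sum_sum_d1] at hle
  have hcol : ∀ i, ∑ x ∈ C, ∑ y ∈ C, |x i - y i|
      ≤ (#C : ℤ) ^ 2 - (#{x ∈ C | x i = 0} : ℤ) ^ 2 := fun i => by
    rw [sum_sum_abs_sub_of_ternary C (· i) fun x hx => hQ x hx i]
    linarith [sq_nonneg (∑ x ∈ C, x i)]
  have := hlow.trans (sum_le_sum fun i _ => hcol i)
  rw [sum_sub_distrib, sum_const, card_univ, Fintype.card_fin, nsmul_eq_mul] at this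
  linarith

lemma card_mul_card_sub_one_mul_eq_of_card_eq {n d : ℕ} (hnd : n < d) {M : ℕ}
    (hM : (M : ℚ) = d / (d - n)) : (M : ℤ) * (M - 1) * d = n * M ^ 2 := by
  have hdn : (d : ℚ) - n ≠ 0 := sub_ne_zero.mpr (by exact_mod_cast hnd.ne')
  rw [eq_div_iff hdn] at hM
  have : (M : ℚ) * (M - 1) * d = n * M ^ 2 := by linear_combination (M : ℚ) * hM
  exact_mod_cast this

/-- A code attaining the Plotkin bound `d/(d-n)` for the `d₁`-distance is a code
over `{-1,1}^n`. -/
theorem stmt_16 (n d : ℕ) (hnd : n < d) (C : Finset (Fin n → ℤ))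
    (hQ : ∀ x ∈ C, isQ x)
    (hd : ∀ x ∈ C, ∀ y ∈ C, x ≠ y → d ≤ d1 x y)
    (heq : (C.card : ℚ) = (d : ℚ) / ((d : ℚ) - (n : ℚ))) :
    ∀ x ∈ C, ∀ i, x i = -1 ∨ x i = 1 := by
  intro x hx i
  have hbound := card_mul_card_sub_one_mul_add_sum_sq_card_zero_le C hQ hd
  rw [card_mul_card_sub_one_mul_eq_of_card_eq hnd heq] at hbound
  have hsum : ∑ j, (#{y ∈ C | y j = 0} : ℤ) ^ 2 = 0 :=
    le_antisymm (by linarith) (sum_nonneg fun _ _ => sq_nonneg _)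
  have hcard : #{y ∈ C | y i = 0} = 0 := by
    have := (sum_eq_zero_iff_of_nonneg fun _ _ => sq_nonneg _).mp hsum i (mem_univ i)
    exact_mod_cast pow_eq_zero_iff two_ne_zero |>.mp this
  have hxi : x i ≠ 0 := filter_eq_empty_iff.mp (card_eq_zero.mp hcard) hx
  exact (hQ x hx i).imp_right fun h => h.resolve_left hxi
end
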